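/- Let A be a torsion-free abelian group of rank 1 (a subgroup of ℚ), t an automorphism of A, and C ≤ A an infinite cyclic subgroup with generator c such that t(c) = m·c for an integer m ≠ 0 and A = ⋃_{k≥0} t⁻ᵏ(C). Then A is isomorphic to ℤ[1/m]. -/

import Mathlib

/-!
An additive endomorphism of a subgroup of `ℚ` is multiplication by a rational, since any two
elements are commensurable; so `t` is multiplication by `m` and `t⁻ᵏ c = c / mᵏ`. The hypothesis
on `t` then says that `A = c · ℤ[1/m]`, and dividing by `c` is the isomorphism.
-/

/-- The additive subgroup `ℤ[1/m]` of `ℚ`, generated by the powers `m⁻ᵏ`. -/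
def zOneOver (m : ℤ) : AddSubgroup ℚ :=
  AddSubgroup.closure {x : ℚ | ∃ k : ℕ, x = ((m : ℚ) ^ k)⁻¹}

theorem intCast_div_pow_mem_zOneOver (m n : ℤ) (k : ℕ) :
    (n : ℚ) / (m : ℚ) ^ k ∈ zOneOver m := by
  rw [div_eq_mul_inv, ← zsmul_eq_mul]
  exact zsmul_mem (AddSubgroup.subset_closure ⟨k, rfl⟩ : ((m : ℚ) ^ k)⁻¹ ∈ zOneOver m) n

theorem zOneOver_le_iff {m : ℤ} {S : AddSubgroup ℚ} :
    zOneOver m ≤ S ↔ ∀ k : ℕ, ((m : ℚ) ^ k)⁻¹ ∈ S := by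
  simp [zOneOver, AddSubgroup.closure_le, Set.subset_def]

theorem AddMonoidHom.map_mul_coe_comm {A : AddSubgroup ℚ} (f : A →+ ℚ) (x y : A) :
    f x * y = f y * x := by
  -- both sides equal `x.num * y.num`
  have hxy : (((x : ℚ).den * (y : ℚ).num : ℤ) • x : A) =
      (((y : ℚ).den * (x : ℚ).num : ℤ) • y : A) := by
    ext
    simp only [AddSubgroup.coe_zsmul, zsmul_eq_mul, Int.cast_mul, Int.cast_natCast]
    rw [mul_right_comm, Rat.den_mul_eq_num, mul_right_comm, Rat.den_mul_eq_num, mul_comm]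
  have hf := congrArg f hxy
  simp only [map_zsmul, zsmul_eq_mul, Int.cast_mul, Int.cast_natCast] at hf
  have hden : ((x : ℚ).den * (y : ℚ).den : ℚ) ≠ 0 := by positivity
  apply mul_left_cancel₀ hden
  calc ((x : ℚ).den * (y : ℚ).den : ℚ) * (f x * y)
      = ((x : ℚ).den * ((y : ℚ) * (y : ℚ).den)) * f x := by ring
    _ = ((y : ℚ).den * ((x : ℚ) * (x : ℚ).den)) * f y := by
      rw [Rat.mul_den_eq_num, Rat.mul_den_eq_num, hf]
    _ = ((x : ℚ).den * (y : ℚ).den : ℚ) * (f y * x) := by ring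

theorem AddMonoidHom.coe_apply_eq_mul_of_apply_eq_zsmul {A : AddSubgroup ℚ} (f : A →+ A)
    {c : A} (hc : c ≠ 0) {m : ℤ} (hfc : f c = m • c) (x : A) : (f x : ℚ) = m * x := by
  have hcQ : (c : ℚ) ≠ 0 := by simpa using hc
  have h := (A.subtype.comp f).map_mul_coe_comm x c
  simp only [AddMonoidHom.coe_comp, Function.comp_apply, AddSubgroup.coe_subtype, hfc,
    AddSubgroup.coe_zsmul, zsmul_eq_mul] at h
  exact mul_right_cancel₀ hcQ (by rw [h]; ring)

theorem AddAut.coe_nsmul_apply_eq_pow_mul {A : AddSubgroup ℚ} {σ : AddAut A} {r : ℚ}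
    (hσ : ∀ x, (σ x : ℚ) = r * x) (k : ℕ) (x : A) : ((k • σ) x : ℚ) = r ^ k * x := by
  induction k generalizing x with
  | zero => simp
  | succ k ih => rw [succ_nsmul, AddAut.add_apply, ih, hσ, pow_succ, mul_assoc]

theorem AddSubgroup.map_mulRight_inv_eq_zOneOver {A : AddSubgroup ℚ} {c : ℚ} {m : ℤ}
    (hc : c ≠ 0) (hm : m ≠ 0) (hdiv : ∀ k : ℕ, c / (m : ℚ) ^ k ∈ A)
    (hmul : ∀ x ∈ A, ∃ k : ℕ, ∃ n : ℤ, (m : ℚ) ^ k * x = n * c) :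
    A.map (AddMonoidHom.mulRight c⁻¹) = zOneOver m := by
  apply le_antisymm
  · rintro _ ⟨x, hx, rfl⟩
    obtain ⟨k, n, hxn⟩ := hmul x hx
    have hmk : (m : ℚ) ^ k ≠ 0 := pow_ne_zero k (Int.cast_ne_zero.mpr hm)
    have hx' : x * c⁻¹ = n / (m : ℚ) ^ k := by
      rw [eq_div_iff hmk, mul_right_comm, mul_comm x, hxn, mul_inv_cancel_right₀ hc]
    simpa [hx'] using intCast_div_pow_mem_zOneOver m n k
  · refine zOneOver_le_iff.mpr fun k => ⟨c / (m : ℚ) ^ k, hdiv k, ?_⟩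
    simp only [AddMonoidHom.coe_mulRight]
    field_simp

theorem stmt_15_general (A : AddSubgroup ℚ) (t : A ≃+ A) (c : A) (hc : c ≠ 0)
    (m : ℤ) (hm : m ≠ 0) (htc : t c = m • c)
    (hunion : ∀ x : A, ∃ k : ℕ, (k • (show AddAut A from t)) x ∈ AddSubgroup.zmultiples c) :
    Nonempty (A ≃+ zOneOver m) := by
  have hcQ : (c : ℚ) ≠ 0 := by simpa using hc
  have htk (k : ℕ) (x : A) : (((k • (show AddAut A from t)) x : A) : ℚ) = (m : ℚ) ^ k * x :=
    AddAut.coe_nsmul_apply_eq_pow_mul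
      (t.toAddMonoidHom.coe_apply_eq_mul_of_apply_eq_zsmul hc htc) k x
  have hdiv (k : ℕ) : (c : ℚ) / (m : ℚ) ^ k ∈ A := by
    set y := (-(k • (show AddAut A from t))) c
    have hy : (m : ℚ) ^ k * y = c := by rw [← htk, AddAut.apply_neg_self]
    rw [← hy, mul_div_cancel_left₀ _ (pow_ne_zero k (Int.cast_ne_zero.mpr hm))]
    exact y.2
  have hmul (x : ℚ) (hx : x ∈ A) : ∃ k : ℕ, ∃ n : ℤ, (m : ℚ) ^ k * x = n * c := by
    obtain ⟨k, n, hn⟩ := hunion ⟨x, hx⟩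
    have hkx := htk k ⟨x, hx⟩
    rw [← hn] at hkx
    exact ⟨k, n, by simpa using hkx.symm⟩
  exact ⟨(A.equivMapOfInjective _ (mul_left_injective₀ (inv_ne_zero hcQ))).trans
    (AddEquiv.addSubgroupCongr (A.map_mulRight_inv_eq_zOneOver hcQ hm hdiv hmul))⟩

/-- If `A ≤ ℚ` is nontrivial, `t` an automorphism of `A`, `c ≠ 0` with `t c = m • c` and
`A = ⋃ₖ t⁻ᵏ⟨c⟩`, then `A ≅ ℤ[1/m]`. -/
theorem stmt_15 (A : AddSubgroup ℚ) (hA : A ≠ ⊥) (t : A ≃+ A) (c : A) (hc : c ≠ 0)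
    (m : ℤ) (hm : m ≠ 0) (htc : t c = m • c)
    (hunion : ∀ x : A, ∃ k : ℕ, (k • (show AddAut A from t)) x ∈ AddSubgroup.zmultiples c) :
    Nonempty (A ≃+ zOneOver m) :=
  stmt_15_general A t c hc m hm htc hunion
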